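/- Suppose each vertex of a finite connected 2n-regular planar graph has exactly 2n - 2 angles marked 'uniform' (out of its 2n angles), and suppose every face has at least 2 uniform angles on its boundary. Then counting angles two ways yields a contradiction: (2n-2)V ≥ 2F = 2((n-1)V + 2) = (2n-2)V + 4 is impossible. Hence some face has fewer than 2 uniform angles. -/
import Mathlib


/-- In a connected `2n`-regular planar graph (`F = (n-1)V + 2` faces), if each of the
`V` vertices has exactly `2n - 2` uniform angles, then it is impossible for every face
to have at least `2` uniform angles; some face has fewer than `2` uniform angles. -/
theorem stmt4 (n V F : ℕ) (hn : 2 ≤ n) (hF : F = (n - 1) * V + 2)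
    (u : Fin F → ℕ) (hsum : ∑ i, u i = (2 * n - 2) * V) :
    ¬ (∀ i, 2 ≤ u i) ∧ ∃ i, u i < 2 := by
  have key : ¬ (∀ i, 2 ≤ u i) := by
    intro h
    have hge : 2 * F ≤ ∑ i, u i := by
      calc 2 * F = ∑ _i : Fin F, 2 := by simp [Finset.sum_const, mul_comm]
        _ ≤ ∑ i, u i := Finset.sum_le_sum fun i _ => h i
    rw [hsum, hF] at hge
    have h1 : 2 * n - 2 = 2 * (n - 1) := by omega
    rw [h1, mul_assoc] at hge
    omega
  refine ⟨key, ?_⟩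
  by_contra hc
  push_neg at hc
  exact key fun i => hc i
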